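/- There exists n₀ such that for all n ≥ n₀ (with n a power of 4, n = 2^{2x}), setting k₁ = 4x and k₃ = √n, there exist sets U_1, ..., U_{2^{k₁}} ⊆ [k₃] such that: (1) log(n) ≤ |U_i| ≤ 21·log(n) for all i; (2) each element j ∈ [k₃] belongs to at most 22·2^{k₁}·log(n)/k₃ of the sets; (3) |U_{i₁} ∩ U_{i₂}| ≤ 10 for all i₁ ≠ i₂. -/

import Mathlib

/-!
Reed–Solomon construction. Pick a prime `p` with `2^x < 8xp ≤ 2^(x+1)` (Bertrand) and embed
`[2x] × 𝔽_p` into `[2^x]`. A polynomial `f` over `𝔽_p` of degree at most `10` gives the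
graph `{(t, f t) : t < 2x}` of `2x = log n` points, and the graphs of distinct such polynomials
share at most `10` points. Take the polynomials `c + X g` with `c ∈ 𝔽_p` arbitrary and `g`
among `8x·2^(3x) ≤ p^10` fixed polynomials of degree `< 10`: these are at least `2^(4x)` sets,
and a point `(t, v)` lies on exactly one graph for each `g`, hence in at most
`8x·2^(3x) ≤ 22·2^(4x)·log n/2^x` of the sets.
-/

open Finset Polynomial Filter

structure IsUniformPacking {ι α : Type*} [Fintype ι] [DecidableEq α] (U : ι → Finset α)
    (r Δ t : ℕ) : Prop where
  card_eq : ∀ i, #(U i) = r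
  card_filter_mem_le : ∀ a, #{i | a ∈ U i} ≤ Δ
  card_inter_le : ∀ i j, i ≠ j → #(U i ∩ U j) ≤ t

namespace IsUniformPacking

variable {ι κ α β : Type*} [Fintype ι] [Fintype κ] [DecidableEq α] [DecidableEq β]
  {U : ι → Finset α} {r Δ t : ℕ}

theorem comp_embedding (hU : IsUniformPacking U r Δ t) (g : κ ↪ ι) :
    IsUniformPacking (U ∘ g) r Δ t where
  card_eq k := hU.card_eq (g k)
  card_filter_mem_le a :=
    (card_le_card_of_injOn g (fun k hk => by simpa using hk) g.injective.injOn).trans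
      (hU.card_filter_mem_le a)
  card_inter_le k l hkl := hU.card_inter_le (g k) (g l) (g.injective.ne hkl)

theorem map (hU : IsUniformPacking U r Δ t) (e : α ↪ β) :
    IsUniformPacking (fun i => (U i).map e) r Δ t where
  card_eq i := by rw [card_map, hU.card_eq]
  card_filter_mem_le b := by
    by_cases hb : ∃ a, e a = b
    · obtain ⟨a, rfl⟩ := hb
      simpa only [mem_map' e] using hU.card_filter_mem_le a
    · push Not at hb
      simp [Finset.mem_map, hb]
  card_inter_le i j hij := by rw [← map_inter, card_map]; exact hU.card_inter_le i j hij

end IsUniformPacking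

section Graph

variable {S β : Type*} [Fintype S]

def graphFinset (g : S → β) : Finset (S × β) :=
  univ.map ⟨fun s => (s, g s), fun _ _ h => congrArg Prod.fst h⟩

@[simp]
theorem mem_graphFinset {g : S → β} {p : S × β} : p ∈ graphFinset g ↔ g p.1 = p.2 := by
  simp only [graphFinset, Finset.mem_map, mem_univ, true_and]
  constructor
  · rintro ⟨s, rfl⟩
    rfl
  · intro h
    exact ⟨p.1, Prod.ext rfl h⟩

@[simp]
theorem card_graphFinset (g : S → β) : #(graphFinset g) = Fintype.card S := by
  simp [graphFinset]

theorem card_graphFinset_inter_le [DecidableEq S] [DecidableEq β] (g h : S → β) :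
    #(graphFinset g ∩ graphFinset h) ≤ #{s | g s = h s} := by
  refine card_le_card_of_injOn Prod.fst (fun p hp => ?_) (fun p hp q hq hpq => ?_)
  · simp only [coe_inter, Set.mem_inter_iff, mem_coe, mem_graphFinset] at hp
    simp [hp.1, hp.2]
  · simp only [coe_inter, Set.mem_inter_iff, mem_coe, mem_graphFinset] at hp hq
    exact Prod.ext hpq (by rw [← hp.1, ← hq.1, hpq])

end Graph

theorem Polynomial.card_filter_eval_eq_le {R : Type*} [CommRing R] [IsDomain R]
    [DecidableEq R] {P Q : R[X]} {d : ℕ} (hPQ : P ≠ Q) (hP : P.degree ≤ d)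
    (hQ : Q.degree ≤ d) (s : Finset R) :
    #{x ∈ s | P.eval x = Q.eval x} ≤ d := by
  by_contra! h
  have hd : (d : WithBot ℕ) < #{x ∈ s | P.eval x = Q.eval x} := by exact_mod_cast h
  exact hPQ (eq_of_degrees_lt_of_eval_finset_eq _ (hP.trans_lt hd) (hQ.trans_lt hd)
    fun x hx => (mem_filter.1 hx).2)

theorem Polynomial.C_add_X_mul_injective {R : Type*} [CommRing R] [IsDomain R] :
    Function.Injective fun cq : R × R[X] => C cq.1 + X * cq.2 := by
  rintro ⟨c, q⟩ ⟨c', q'⟩ h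
  have hc : c = c' := by simpa using congrArg (coeff · 0) h
  subst hc
  exact Prod.ext rfl (mul_left_cancel₀ X_ne_zero (add_left_cancel h))

theorem exists_isUniformPacking_of_card_le_pow (F : Type*) [Field F] [Fintype F]
    [DecidableEq F] {S M : Type*} [Fintype S] [DecidableEq S] [Fintype M]
    (ev : S ↪ F) (d : ℕ) (hM : Fintype.card M ≤ Fintype.card F ^ d) :
    ∃ U : F × M → Finset (S × F),
      IsUniformPacking U (Fintype.card S) (Fintype.card M) d := by
  obtain ⟨w⟩ : Nonempty (M ↪ (Fin d → F)) :=
    Function.Embedding.nonempty_of_card_le (by simpa using hM)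
  let Q : M → F[X] := fun a => ((degreeLTEquiv F d).symm (w a) : F[X])
  have hQ_inj : Function.Injective Q :=
    Subtype.val_injective.comp ((degreeLTEquiv F d).symm.injective.comp w.injective)
  let P : F × M → F[X] := fun i => C i.1 + X * Q i.2
  have hP_inj : Function.Injective P := by
    rintro ⟨c, a⟩ ⟨c', a'⟩ h
    have h' := Prod.ext_iff.1
      (C_add_X_mul_injective (R := F) (a₁ := (c, Q a)) (a₂ := (c', Q a')) h)
    exact Prod.ext h'.1 (hQ_inj h'.2)
  have hP_deg : ∀ i, (P i).degree ≤ d := fun i => by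
    have hQ_deg : (Q i.2).degree < d := mem_degreeLT.1 ((degreeLTEquiv F d).symm (w i.2)).2
    refine (degree_add_le _ _).trans (max_le (degree_C_le.trans (by simp)) ?_)
    rw [X_mul, degree_mul_X]
    exact Nat.WithBot.add_one_le_of_lt hQ_deg
  refine ⟨fun i => graphFinset fun s => (P i).eval (ev s),
    ⟨fun i => card_graphFinset _, ?_, ?_⟩⟩
  · -- through a point `(s, v)`, the constant term `c` of `P (c, a)` is determined by `a`
    rintro ⟨s, v⟩
    refine (card_le_card_of_injOn Prod.snd (fun _ _ => mem_coe.2 (mem_univ _)) ?_).trans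
      (card_univ (α := M)).le
    rintro ⟨c, a⟩ hca ⟨c', a'⟩ hca' (rfl : a = a')
    simp only [coe_filter, mem_univ, true_and, Set.mem_ofPred_eq, mem_graphFinset, P, eval_add,
      eval_C, eval_mul, eval_X] at hca hca'
    rw [← hca'] at hca
    exact Prod.ext (add_right_cancel hca) rfl
  · intro i j hij
    calc #(graphFinset (fun s => (P i).eval (ev s)) ∩ graphFinset fun s => (P j).eval (ev s))
        ≤ #{s | (P i).eval (ev s) = (P j).eval (ev s)} := card_graphFinset_inter_le _ _
      _ = #{x ∈ univ.map ev | (P i).eval x = (P j).eval x} := by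
        rw [← card_map ev, filter_map]; rfl
      _ ≤ d := card_filter_eval_eq_le (hP_inj.ne hij) (hP_deg i) (hP_deg j) _

theorem exists_isUniformPacking_fin (F : Type*) [Field F] [Fintype F] [DecidableEq F]
    {d s M N K : ℕ} (hs : s ≤ Fintype.card F) (hM : M ≤ Fintype.card F ^ d)
    (hN : N ≤ Fintype.card F * M) (hK : s * Fintype.card F ≤ K) :
    ∃ U : Fin N → Finset (Fin K), IsUniformPacking U s M d := by
  let eF := Fintype.equivFin F
  let ev : Fin s ↪ F := (Fin.castLEEmb hs).trans eF.symm.toEmbedding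
  obtain ⟨U, hU⟩ :=
    exists_isUniformPacking_of_card_le_pow F (M := Fin M) ev d (by simpa using hM)
  let idx : Fin N ↪ F × Fin M := (Fin.castLEEmb hN).trans
    (finProdFinEquiv.symm.trans ((eF.symm).prodCongr (Equiv.refl _))).toEmbedding
  let pt : Fin s × F ↪ Fin K :=
    (((Equiv.refl _).prodCongr eF).trans finProdFinEquiv).toEmbedding.trans (Fin.castLEEmb hK)
  simp only [Fintype.card_fin] at hU
  exact ⟨_, (hU.comp_embedding idx).map pt⟩

theorem Nat.exists_prime_lt_mul_le_two_mul {B L : ℕ} (hL : 0 < L) (hLB : L ≤ B) :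
    ∃ p, p.Prime ∧ B < L * p ∧ L * p ≤ 2 * B := by
  have hm : B / L ≠ 0 := (Nat.div_pos hLB hL).ne'
  obtain ⟨p, hp, hmp, hp2m⟩ := Nat.exists_prime_lt_and_le_two_mul (B / L) hm
  refine ⟨p, hp, (Nat.lt_mul_div_succ B hL).trans_le (Nat.mul_le_mul_left L hmp), ?_⟩
  calc L * p ≤ L * (2 * (B / L)) := Nat.mul_le_mul_left L hp2m
    _ = 2 * (L * (B / L)) := by ring
    _ ≤ 2 * B := Nat.mul_le_mul_left 2 (Nat.mul_div_le B L)

theorem Nat.eventually_mul_pow_le_pow (c k : ℕ) {b : ℕ} (hb : 1 < b) :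
    ∀ᶠ x : ℕ in atTop, c * x ^ k ≤ b ^ x := by
  have hc : (0 : ℝ) < 1 / (c + 1) := by positivity
  filter_upwards [(isLittleO_pow_const_const_pow_of_one_lt k (R := ℝ)
    (r := b) (by exact_mod_cast hb)).bound hc] with x hx
  simp only [norm_pow, RCLike.norm_natCast] at hx
  have : (c : ℝ) * x ^ k ≤ b ^ x := by
    calc (c : ℝ) * x ^ k ≤ (c + 1) * x ^ k := by gcongr; linarith
      _ ≤ (c + 1) * (1 / (c + 1) * b ^ x) := by gcongr
      _ = b ^ x := by field_simp
  exact_mod_cast this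

theorem exists_isUniformPacking_two_pow {x : ℕ} (hx : 0 < x) (hsq : 16 * x ^ 2 ≤ 2 ^ x)
    (hpow : 8 ^ 11 * x ^ 11 ≤ (2 ^ 7) ^ x) :
    ∃ U : Fin (2 ^ (4 * x)) → Finset (Fin (2 ^ x)),
      IsUniformPacking U (2 * x) (8 * x * 2 ^ (3 * x)) 10 := by
  obtain ⟨p, hp, hlow, hhigh⟩ :=
    Nat.exists_prime_lt_mul_le_two_mul (B := 2 ^ x) (L := 8 * x) (by omega) (by nlinarith)
  have := Fact.mk hp
  have h3x : 0 < 2 ^ (3 * x) := by positivity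
  refine exists_isUniformPacking_fin (ZMod p) ?_ ?_ ?_ ?_ <;> rw [ZMod.card]
  · nlinarith
  · -- compare `10`-th powers in `2 ^ x < 8 * x * p`
    refine Nat.le_of_mul_le_mul_left ?_ (pow_pos (by omega : 0 < 8 * x) 10)
    calc (8 * x) ^ 10 * (8 * x * 2 ^ (3 * x)) = 8 ^ 11 * x ^ 11 * 2 ^ (3 * x) := by ring
      _ ≤ (2 ^ 7) ^ x * 2 ^ (3 * x) := Nat.mul_le_mul_right _ hpow
      _ = (2 ^ x) ^ 10 := by rw [← pow_mul, ← pow_add, ← pow_mul]; ring_nf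
      _ ≤ (8 * x * p) ^ 10 := Nat.pow_le_pow_left hlow.le 10
      _ = (8 * x) ^ 10 * p ^ 10 := mul_pow _ _ _
  · calc 2 ^ (4 * x) = 2 ^ x * 2 ^ (3 * x) := by rw [← pow_add]; ring_nf
      _ ≤ 8 * x * p * 2 ^ (3 * x) := Nat.mul_le_mul_right _ hlow.le
      _ = p * (8 * x * 2 ^ (3 * x)) := by ring
  · nlinarith

/-- Existence of the set system for the non-downward-closed construction: for all
sufficiently large `n = 2^(2x)`, with `k₁ = 4x` and `k₃ = √n = 2^x`, there are sets
`U_1, …, U_{2^{k₁}} ⊆ [k₃]` with `log n ≤ |U_i| ≤ 21·log n`, each element in at most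
`22·2^{k₁}·log(n)/k₃` of the sets, and pairwise intersections of size at most `10`. -/
theorem stmt_9 : ∃ n₀ : ℕ, ∀ x n : ℕ, n₀ ≤ n → n = 2 ^ (2 * x) →
    ∃ U : Fin (2 ^ (4 * x)) → Finset (Fin (2 ^ x)),
      (∀ i, Real.logb 2 n ≤ ((U i).card : ℝ) ∧ ((U i).card : ℝ) ≤ 21 * Real.logb 2 n) ∧
      (∀ j : Fin (2 ^ x),
        ((Finset.univ.filter (fun i => j ∈ U i)).card : ℝ)
          ≤ 22 * 2 ^ (4 * x) * Real.logb 2 n / 2 ^ x) ∧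
      (∀ i₁ i₂, i₁ ≠ i₂ → ((U i₁ ∩ U i₂).card : ℕ) ≤ 10) := by
  obtain ⟨x₀, hx₀⟩ := eventually_atTop.1 <| (eventually_gt_atTop 0).and <|
    (Nat.eventually_mul_pow_le_pow 16 2 one_lt_two).and
      (Nat.eventually_mul_pow_le_pow (8 ^ 11) 11 (b := 2 ^ 7) (by norm_num))
  refine ⟨2 ^ (2 * x₀), fun x n hn hxn => ?_⟩
  subst hxn
  have hxx₀ : x₀ ≤ x := by
    have := (Nat.pow_le_pow_iff_right one_lt_two).1 hn
    omega
  obtain ⟨hx, hsq, hpow⟩ := hx₀ x hxx₀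
  obtain ⟨U, hU⟩ := exists_isUniformPacking_two_pow hx hsq hpow
  have hlog : Real.logb 2 ((2 ^ (2 * x) : ℕ) : ℝ) = 2 * x := by
    simp [Real.logb_pow]
  refine ⟨U, fun i => ?_, fun j => ?_, hU.card_inter_le⟩
  · rw [hU.card_eq, hlog]
    constructor <;> push_cast <;> linarith [(Nat.cast_nonneg x : (0 : ℝ) ≤ x)]
  · have hrhs : (22 : ℝ) * 2 ^ (4 * x) * (2 * x) / 2 ^ x = 44 * x * 2 ^ (3 * x) := by
      rw [show 4 * x = 3 * x + x by ring, pow_add]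
      field_simp
      ring
    rw [hlog, hrhs]
    calc _ ≤ ((8 * x * 2 ^ (3 * x) : ℕ) : ℝ) := by exact_mod_cast hU.card_filter_mem_le j
      _ ≤ 44 * x * 2 ^ (3 * x) := by push_cast; gcongr; norm_num
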